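/- arXiv:2208.11820 — 2 statements merged into one kernel-verified Lean document; each statement's English description precedes it below -/
import Mathlib

section
/- Let K be a field with algebraic closure K̄ and let f ∈ K(x) be a nonzero rational function with deg f ≥ 2; let d be the greatest proper divisor of deg f. Suppose ord_∞ f ≠ 0 and there exists a prime number p with p > d such that p divides ord_∞ f. Then f is prime over K̄: writing f̄ for the image of f in K̄(x) under the inclusion K(x) → K̄(x), there do not exist g, h ∈ K̄(x) with deg g ≥ 2, deg h ≥ 2, and f̄ = g ∘ h. -/
/-- The degree of a rational function `f = f₁/f₂` (with `f₁, f₂` coprime) is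
`max (deg f₁) (deg f₂)`. -/
noncomputable def ratDeg {K : Type*} [Field K] (f : RatFunc K) : ℕ :=
  max f.num.natDegree f.denom.natDegree

/-- The composition `g ∘ h` of rational functions: writing `g = g₁/g₂` with `g₁, g₂`
coprime, `g ∘ h = g₁(h) / g₂(h)`. -/
noncomputable def ratComp {K : Type*} [Field K] (g h : RatFunc K) : RatFunc K :=
  Polynomial.aeval h g.num / Polynomial.aeval h g.denom

/-- The order of vanishing at infinity of a rational function `f = f₁/f₂`
(with `f₁, f₂` coprime): `ord_∞ f = deg f₂ − deg f₁ = −intDegree f`. -/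
noncomputable def ordInf {K : Type*} [Field K] (f : RatFunc K) : ℤ :=
  -f.intDegree

/-- The image of `f = f₁/f₂ ∈ K(x)` in `K̄(x)` under the inclusion `K(x) → K̄(x)`:
the rational function `f₁(x) / f₂(x)` with coefficients mapped into `K̄`. -/
noncomputable def ratMap {K Kbar : Type*} [Field K] [Field Kbar] [Algebra K Kbar]
    (f : RatFunc K) : RatFunc Kbar :=
  algebraMap (Polynomial Kbar) (RatFunc Kbar) (f.num.map (algebraMap K Kbar)) /
    algebraMap (Polynomial Kbar) (RatFunc Kbar) (f.denom.map (algebraMap K Kbar))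

/-!
`deg f = [K(x) : K(f)]`, and the substitution `x ↦ h` carries the tower `K(g) ⊆ K(x)` onto
`K(g ∘ h) ⊆ K(h)`, so `deg (g ∘ h) = deg g · deg h`. Hence `deg g` and `deg h` are proper divisors
of `deg f`, both at most `d < p`.

On the other hand `ord_∞ (g ∘ h)` factors as `A · B` with `|A| ≤ deg g` and `|B| ≤ deg h`: if `h`
has a pole at `∞` the leading terms dominate and `ord_∞ (g ∘ h) = (deg g₁ - deg g₂) · ord_∞ h`;
otherwise `h(∞) = c` is finite and `ord_∞ (g ∘ h) = ord_c g · ord_∞ (h - c)`. A prime `p > d`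
cannot divide such a nonzero product.
-/

open Polynomial IntermediateField

namespace RatFunc

variable {K : Type*} [Field K]

theorem ne_C_of_ratDeg_ne_zero {h : RatFunc K} (hh : ratDeg h ≠ 0) : ¬∃ c, h = C c := by
  rintro ⟨c, rfl⟩
  simp [ratDeg] at hh

theorem ne_C_of_intDegree_ne_zero {h : RatFunc K} (hh : h.intDegree ≠ 0) : ¬∃ c, h = C c := by
  rintro ⟨c, rfl⟩
  exact hh (intDegree_C c)

theorem aeval_ne_zero_of_ne_C {h : RatFunc K} (hh : ¬∃ c, h = C c) {P : K[X]} (hP : P ≠ 0) :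
    aeval h P ≠ 0 :=
  fun h0 => hP (transcendental_iff.mp (transcendental_of_ne_C h hh) P h0)

noncomputable def compAlgHom (h : RatFunc K) (hh : ¬∃ c, h = C c) :
    RatFunc K →ₐ[K] RatFunc K :=
  liftAlgHom (aeval h) <| nonZeroDivisors_le_comap_nonZeroDivisors_of_injective _ <|
    transcendental_iff_injective.mp (transcendental_of_ne_C h hh)

theorem compAlgHom_apply {h : RatFunc K} (hh : ¬∃ c, h = C c) (g : RatFunc K) :
    compAlgHom h hh g = ratComp g h :=
  liftAlgHom_apply _ _ g

theorem compAlgHom_X {h : RatFunc K} (hh : ¬∃ c, h = C c) : compAlgHom h hh X = h := by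
  simp [compAlgHom_apply, ratComp]

theorem ratDeg_ratComp {h : RatFunc K} (hh : ¬∃ c, h = C c) (g : RatFunc K) :
    ratDeg (ratComp g h) = ratDeg g * ratDeg h := by
  set φ := compAlgHom h hh
  have hX : φ X = h := compAlgHom_X hh
  have map_adjoin : ∀ u, K⟮u⟯.map φ = K⟮φ u⟯ := fun u => by
    rw [adjoin_map, Set.image_singleton]
  have hle : K⟮φ g⟯ ≤ K⟮h⟯ := by
    rw [← hX, ← map_adjoin, ← map_adjoin, adjoin_X]
    exact map_mono _ le_top
  have hrel : relfinrank K⟮φ g⟯ K⟮h⟯ = Module.finrank K⟮g⟯ (RatFunc K) := by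
    rw [← hX, ← map_adjoin, ← map_adjoin, relfinrank_map_map, adjoin_X, relfinrank_top_right]
  simp only [ratDeg, ← finrank_eq_max_natDegree]
  rw [← compAlgHom_apply hh, ← relfinrank_mul_finrank_top hle, hrel]

theorem intDegree_pow (x : RatFunc K) (n : ℕ) : (x ^ n).intDegree = n * x.intDegree := by
  rcases eq_or_ne x 0 with rfl | hx
  · cases n <;> simp
  induction n with
  | zero => simp
  | succ n ih => rw [pow_succ, intDegree_mul (pow_ne_zero _ hx) hx, ih]; push_cast; ring

theorem intDegree_add_eq_right_of_lt {x y : RatFunc K} (hy : y ≠ 0)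
    (hxy : x.intDegree < y.intDegree) : (x + y).intDegree = y.intDegree := by
  rcases eq_or_ne x 0 with rfl | hx
  · rw [zero_add]
  have hsum : x + y ≠ 0 := fun h0 => by
    rw [← neg_eq_of_add_eq_zero_right h0, intDegree_neg] at hxy
    exact lt_irrefl _ hxy
  have hle := intDegree_add_le hy hsum
  have hge := intDegree_add_le (neg_ne_zero.mpr hx)
    (by rwa [add_neg_cancel_comm] : x + y + -x ≠ 0)
  rw [add_neg_cancel_comm, intDegree_neg] at hge
  omega

theorem intDegree_aeval_of_pos {y : RatFunc K} (hy : 0 < y.intDegree) (P : K[X]) :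
    (aeval y P).intDegree = P.natDegree * y.intDegree := by
  induction P using induction_with_natDegree_le (N := P.natDegree) with
  | zero => simp
  | C_mul_pow n a ha _ =>
    rw [map_mul, aeval_C, map_pow, aeval_X, algebraMap_eq_C,
      intDegree_mul (by simpa using ha) (pow_ne_zero _ (by rintro rfl; simp at hy)),
      intDegree_C, intDegree_pow, natDegree_C_mul_X_pow n a ha, zero_add]
  | add P Q hPQ _ hP hQ =>
    have hQ0 : aeval y Q ≠ 0 := fun h0 => by
      rw [h0, intDegree_zero] at hQ
      have : (0 : ℤ) < Q.natDegree * y.intDegree := by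
        have : (0 : ℤ) < Q.natDegree := by exact_mod_cast (Nat.zero_le _).trans_lt hPQ
        positivity
      omega
    rw [map_add, intDegree_add_eq_right_of_lt hQ0 (by rw [hP, hQ]; gcongr), hQ,
      natDegree_add_eq_right_of_natDegree_lt hPQ]
  | df => exact le_rfl

theorem intDegree_aeval_of_neg {y : RatFunc K} (hy : y.intDegree < 0) (P : K[X]) :
    (aeval y P).intDegree = P.natTrailingDegree * y.intDegree := by
  rcases eq_or_ne P 0 with rfl | hP
  · simp
  have hy0 : y ≠ 0 := by rintro rfl; simp at hy
  have hinv : 0 < y⁻¹.intDegree := by rw [intDegree_inv]; omega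
  let _ : Invertible y := invertibleOfNonzero hy0
  -- Reversal turns the trailing term of `P` into the leading one and `y` into `y⁻¹`.
  have hrev : aeval y⁻¹ P.reverse * y ^ P.natDegree = aeval y P := by
    simpa [aeval_def, invOf_eq_inv] using eval₂_reverse_mul_pow (algebraMap K (RatFunc K)) y P
  rw [← hrev, intDegree_mul (aeval_ne_zero_of_ne_C (ne_C_of_intDegree_ne_zero hinv.ne')
      (reverse_eq_zero.not.mpr hP)) (pow_ne_zero _ hy0), intDegree_aeval_of_pos hinv,
    intDegree_pow, reverse_natDegree, intDegree_inv,
    Nat.cast_sub (natTrailingDegree_le_natDegree P)]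
  ring

theorem intDegree_aeval_of_intDegree_sub_C_neg {h : RatFunc K} {c : K}
    (hc : (h - C c).intDegree < 0) (P : K[X]) :
    (aeval h P).intDegree = P.rootMultiplicity c * (h - C c).intDegree := by
  rw [rootMultiplicity_eq_natTrailingDegree, ← intDegree_aeval_of_neg hc, aeval_comp]
  simp [algebraMap_eq_C]

theorem sub_C_mul_denom (h : RatFunc K) (c : K) :
    (h - C c) * algebraMap K[X] (RatFunc K) h.denom =
      algebraMap K[X] (RatFunc K) (h.num - Polynomial.C c * h.denom) := by
  nth_rewrite 1 [← num_div_denom h]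
  rw [sub_mul, div_mul_cancel₀ _ (algebraMap_ne_zero h.denom_ne_zero), map_sub, map_mul,
    algebraMap_C]

theorem intDegree_sub_C {h : RatFunc K} {c : K} (hc : h - C c ≠ 0) :
    (h - C c).intDegree = (h.num - Polynomial.C c * h.denom).natDegree - h.denom.natDegree := by
  have := congrArg intDegree (sub_C_mul_denom h c)
  rw [intDegree_mul hc (algebraMap_ne_zero h.denom_ne_zero), intDegree_polynomial,
    intDegree_polynomial] at this
  omega

theorem exists_intDegree_sub_C_neg {h : RatFunc K} (hh : ¬∃ c, h = C c)
    (hreg : h.intDegree ≤ 0) : ∃ c, (h - C c).intDegree < 0 := by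
  -- `c = h(∞)`: it cancels the top coefficient of `h.num` against the monic `h.denom`.
  set c := h.num.coeff h.denom.natDegree
  have hc : h - C c ≠ 0 := fun h0 => hh ⟨c, sub_eq_zero.mp h0⟩
  refine ⟨c, ?_⟩
  have hmul := sub_C_mul_denom h c
  rw [intDegree_sub_C hc]
  set P := h.num - Polynomial.C c * h.denom
  have hP0 : P ≠ 0 := by
    rintro hP
    rw [hP, map_zero] at hmul
    exact mul_ne_zero hc (algebraMap_ne_zero h.denom_ne_zero) hmul
  have hnum : h.num.natDegree ≤ h.denom.natDegree := by unfold intDegree at hreg; omega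
  have hdeg : P.natDegree ≤ h.denom.natDegree :=
    (natDegree_sub_le_of_le hnum (natDegree_C_mul_le _ _)).trans (max_self _).le
  have hcoeff : P.coeff h.denom.natDegree = 0 := by
    simp [P, c, coeff_C_mul, h.monic_denom.coeff_natDegree]
  have hne : P.natDegree ≠ h.denom.natDegree := fun e =>
    hP0 (leadingCoeff_eq_zero.mp (by rwa [leadingCoeff, e]))
  omega

theorem intDegree_ratComp {h : RatFunc K} (hh : ¬∃ c, h = C c) (g : RatFunc K) :
    (ratComp g h).intDegree = (aeval h g.num).intDegree - (aeval h g.denom).intDegree := by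
  rcases eq_or_ne g 0 with rfl | hg
  · simp [ratComp]
  rw [ratComp, intDegree_div (aeval_ne_zero_of_ne_C hh (num_ne_zero hg))
    (aeval_ne_zero_of_ne_C hh g.denom_ne_zero)]

theorem natAbs_intDegree_le_ratDeg (f : RatFunc K) : f.intDegree.natAbs ≤ ratDeg f := by
  unfold intDegree ratDeg
  omega

theorem neg_intDegree_sub_C_le_ratDeg (h : RatFunc K) (c : K) :
    -(h - C c).intDegree ≤ ratDeg h := by
  rcases eq_or_ne (h - C c) 0 with h0 | hc
  · simp [h0]
  rw [intDegree_sub_C hc]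
  unfold ratDeg
  omega

theorem rootMultiplicity_le_ratDeg (g : RatFunc K) (c : K) :
    g.num.rootMultiplicity c ≤ ratDeg g ∧ g.denom.rootMultiplicity c ≤ ratDeg g := by
  classical
  have hle : ∀ P : K[X], P.rootMultiplicity c ≤ P.natDegree := fun P =>
    count_roots P ▸ (P.roots.count_le_card c).trans P.card_roots'
  exact ⟨(hle _).trans (le_max_left _ _), (hle _).trans (le_max_right _ _)⟩

theorem exists_ordInf_ratComp_eq_mul {g h : RatFunc K} (hh : ¬∃ c, h = C c) :
    ∃ A B : ℤ, ordInf (ratComp g h) = A * B ∧ A.natAbs ≤ ratDeg g ∧ B.natAbs ≤ ratDeg h := by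
  rcases lt_or_ge 0 h.intDegree with hpole | hregular
  · refine ⟨g.intDegree, -h.intDegree, ?_, natAbs_intDegree_le_ratDeg g,
      by simpa using natAbs_intDegree_le_ratDeg h⟩
    rw [ordInf, intDegree_ratComp hh, intDegree_aeval_of_pos hpole, intDegree_aeval_of_pos hpole]
    unfold intDegree
    ring
  · obtain ⟨c, hc⟩ := exists_intDegree_sub_C_neg hh hregular
    refine ⟨g.num.rootMultiplicity c - g.denom.rootMultiplicity c, -(h - C c).intDegree, ?_, ?_,
      by have := neg_intDegree_sub_C_le_ratDeg h c; omega⟩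
    · rw [ordInf, intDegree_ratComp hh, intDegree_aeval_of_intDegree_sub_C_neg hc,
        intDegree_aeval_of_intDegree_sub_C_neg hc]
      ring
    · have := rootMultiplicity_le_ratDeg g c
      omega

theorem num_denom_div_of_isCoprime {p q : K[X]} (hpq : IsCoprime p q) (hq : q.Monic) :
    (algebraMap K[X] (RatFunc K) p / algebraMap _ _ q).num = p ∧
        (algebraMap K[X] (RatFunc K) p / algebraMap _ _ q).denom = q := by
  classical
  have hgcd : gcd p q = 1 := by
    rw [← normalize_gcd, normalize_eq_one, gcd_isUnit_iff]
    exact hpq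
  simp [hgcd, hq.leadingCoeff, hq.ne_zero]

section

variable {L : Type*} [Field L] [Algebra K L]

theorem num_denom_ratMap (f : RatFunc K) :
    (ratMap (Kbar := L) f).num = f.num.map (algebraMap K L) ∧
      (ratMap (Kbar := L) f).denom = f.denom.map (algebraMap K L) :=
  num_denom_div_of_isCoprime
    (by simpa using f.isCoprime_num_denom.map (Polynomial.mapRingHom (algebraMap K L)))
    (f.monic_denom.map _)

theorem ratDeg_ratMap (f : RatFunc K) : ratDeg (ratMap (Kbar := L) f) = ratDeg f := by
  simp only [ratDeg, num_denom_ratMap, natDegree_map]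

theorem ordInf_ratMap (f : RatFunc K) : ordInf (ratMap (Kbar := L) f) = ordInf f := by
  simp only [ordInf, intDegree, num_denom_ratMap, natDegree_map]

end

end RatFunc

theorem stmt_8_general {K Kbar : Type*} [Field K] [Field Kbar] [Algebra K Kbar]
    (f : RatFunc K)
    (d : ℕ)
    (hdmax : ∀ e : ℕ, e ∣ ratDeg f → e < ratDeg f → e ≤ d)
    (hord : ordInf f ≠ 0) (p : ℕ) (hp : p.Prime) (hpd : d < p)
    (hdvd : (p : ℤ) ∣ ordInf f) :
    ¬ ∃ g h : RatFunc Kbar, 2 ≤ ratDeg g ∧ 2 ≤ ratDeg h ∧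
      ratMap (Kbar := Kbar) f = ratComp g h := by
  rintro ⟨g, h, hg, hh, heq⟩
  have hnc := RatFunc.ne_C_of_ratDeg_ne_zero (h := h) (by omega)
  have hfgh : ratDeg f = ratDeg g * ratDeg h := by
    rw [← RatFunc.ratDeg_ratMap (L := Kbar), heq, RatFunc.ratDeg_ratComp hnc]
  have hgd : ratDeg g ≤ d := hdmax _ (Dvd.intro _ hfgh.symm) (by rw [hfgh]; nlinarith)
  have hhd : ratDeg h ≤ d := hdmax _ (Dvd.intro_left _ hfgh.symm) (by rw [hfgh]; nlinarith)
  obtain ⟨A, B, hAB, hA, hB⟩ := RatFunc.exists_ordInf_ratComp_eq_mul (g := g) hnc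
  rw [← heq, RatFunc.ordInf_ratMap] at hAB
  rw [hAB] at hord hdvd
  have hpAB : p ∣ A.natAbs * B.natAbs := by
    rw [← Int.natAbs_mul]
    exact Int.ofNat_dvd_left.mp hdvd
  rcases hp.dvd_mul.mp hpAB with hpA | hpB
  · have := Nat.le_of_dvd (Int.natAbs_pos.mpr (left_ne_zero_of_mul hord)) hpA
    omega
  · have := Nat.le_of_dvd (Int.natAbs_pos.mpr (right_ne_zero_of_mul hord)) hpB
    omega

/-- Let `K` be a field with algebraic closure `K̄`, and let
`f ∈ K(x)` be nonzero with `deg f ≥ 2`; let `d` be the greatest proper divisor of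
`deg f`.  If `ord_∞ f ≠ 0` is divisible by a prime `p > d`, then `f` is prime over
`K̄`: there do not exist `g, h ∈ K̄(x)` with `deg g ≥ 2`, `deg h ≥ 2` and
`f̄ = g ∘ h`. -/
theorem stmt_8 {K Kbar : Type*} [Field K] [Field Kbar] [Algebra K Kbar]
    [IsAlgClosure K Kbar] (f : RatFunc K) (hf0 : f ≠ 0) (hdeg : 2 ≤ ratDeg f)
    (d : ℕ) (hd : d ∣ ratDeg f) (hdlt : d < ratDeg f)
    (hdmax : ∀ e : ℕ, e ∣ ratDeg f → e < ratDeg f → e ≤ d)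
    (hord : ordInf f ≠ 0) (p : ℕ) (hp : p.Prime) (hpd : d < p)
    (hdvd : (p : ℤ) ∣ ordInf f) :
    ¬ ∃ g h : RatFunc Kbar, 2 ≤ ratDeg g ∧ 2 ≤ ratDeg h ∧
      ratMap (Kbar := Kbar) f = ratComp g h :=
  stmt_8_general f d hdmax hord p hp hpd hdvd
end

section
/- Let K be a field and let f, g, h ∈ K[x] with f = g ∘ h, where g is nonconstant, deg h = k ≥ 2, and f′ ≠ 0. Let D(t) = Res_X(f(X) − t, f′(X)) ∈ K[t]. Then there exist polynomials A, B ∈ K[t] such that D(t) = A(t)^k · B(t) and deg B ≤ k − 1. Moreover, if char K = 0, then deg B = k − 1. -/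
/-!
Work over an algebraic closure of `K(t)`. By the chain rule `f' = (g' ∘ h) * h'`, and the
resultant is multiplicative in its second argument, so
`D = Res(f - t, g' ∘ h) * Res(f - t, h')`.

Since `f - t = (g - t) ∘ h`, each root `β` of `g - t` contributes the `deg h` roots of `h - β`, at
all of which `g' ∘ h` takes the value `g' β`; hence the first factor is
`(lc(h) ^ (deg g * deg g') * Res(g - t, g'))^(deg h)`, a `k`-th power.

The second factor is, up to a nonzero constant, `∏ (f d - t)` over the roots `d` of `h'`, so its
degree in `t` is `deg h' ≤ k - 1`, with equality in characteristic zero.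
-/

open Polynomial

/-- The Sylvester matrix of two polynomials `p, q ∈ R[X]` (with respect to their
`natDegree`s): the first `deg q` rows hold the coefficients of `p`, shifted, and
the last `deg p` rows hold the coefficients of `q`, shifted. -/
noncomputable def sylvesterMatrix {R : Type*} [CommRing R] (p q : Polynomial R) :
    Matrix (Fin (q.natDegree + p.natDegree)) (Fin (q.natDegree + p.natDegree)) R :=
  Matrix.of fun i j =>
    if (i : ℕ) < q.natDegree then
      if (j : ℕ) ≤ p.natDegree + i then p.coeff (p.natDegree + i - j) else 0
    else
      if (j : ℕ) ≤ (i : ℕ) then q.coeff ((i : ℕ) - j) else 0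

/-- The resultant `Res_X(p, q)` of two polynomials, as the determinant of their
Sylvester matrix. -/
noncomputable def resultant {R : Type*} [CommRing R] (p q : Polynomial R) : R :=
  (sylvesterMatrix p q).det

/-- For `f ∈ K[x]` and an auxiliary variable `t`, the polynomial `f(X) − t`
regarded as a polynomial in `X` with coefficients in `K[t]`. -/
noncomputable def polySubT {K : Type*} [Field K] (f : Polynomial K) :
    Polynomial (Polynomial K) :=
  f.map Polynomial.C - Polynomial.C Polynomial.X

theorem resultant_eq_polynomial_resultant {R : Type*} [CommRing R] (p q : R[X]) :
    _root_.resultant p q = Polynomial.resultant p q := by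
  set e : Fin (q.natDegree + p.natDegree) ≃ Fin (p.natDegree + q.natDegree) :=
    Fin.revPerm.trans (finCongr (add_comm _ _))
  suffices sylvesterMatrix p q = (sylvester p q _ _).transpose.submatrix e e by
    rw [_root_.resultant, Polynomial.resultant, this, Matrix.det_submatrix_equiv_self,
      Matrix.det_transpose]
  ext i j
  simp only [sylvesterMatrix, Matrix.of_apply, Matrix.submatrix_apply, Matrix.transpose_apply, e,
    Equiv.trans_apply, Fin.revPerm_apply, finCongr_apply]
  -- The textbook matrix lists descending coefficients in rows, Mathlib's ascending ones in
  -- columns: up to transposition, `e` reverses both rows and columns.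
  induction h : (Fin.cast (add_comm _ _) i.rev : Fin (p.natDegree + q.natDegree))
    using Fin.addCases with
  | left i' | right i' =>
    have hi := congrArg Fin.val h
    have hi' := i'.isLt
    simp only [Fin.val_cast, Fin.val_rev, Fin.val_castAdd, Fin.val_natAdd] at hi
    simp only [sylvester, Matrix.of_apply, Fin.addCases_left, Fin.addCases_right, Set.mem_Icc,
      Fin.val_cast, Fin.val_rev]
    split_ifs <;>
      first | rfl | omega | (congr 1; omega) | exact coeff_eq_zero_of_natDegree_lt (by omega)

namespace Polynomial

variable {R : Type*} [CommRing R] [IsDomain R]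

theorem resultant_multiset_prod_left (s : Multiset R[X]) (hs : (0 : R[X]) ∉ s) (g : R[X])
    (n : ℕ) (hg : g.natDegree ≤ n) :
    resultant s.prod g s.prod.natDegree n = (s.map fun f ↦ resultant f g f.natDegree n).prod := by
  induction s using Multiset.induction_on with
  | empty => simp
  | cons f s ih =>
    rw [Multiset.mem_cons, not_or] at hs
    rw [Multiset.prod_cons, natDegree_mul (Ne.symm hs.1) (Multiset.prod_ne_zero hs.2),
      resultant_mul_left _ _ _ _ hg, ih hs.2, Multiset.map_cons, Multiset.prod_cons]

theorem resultant_sub_C_comp (h u : R[X]) (β : R) (hh : 0 < h.natDegree)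
    (hsplit : (h - C β).Splits) :
    resultant (h - C β) (u.comp h) (h - C β).natDegree (u.natDegree * h.natDegree) =
      (h.leadingCoeff ^ u.natDegree * u.eval β) ^ h.natDegree := by
  have hlc : (h - C β).leadingCoeff = h.leadingCoeff :=
    leadingCoeff_sub_of_degree_lt (degree_C_le.trans_lt (natDegree_pos_iff_degree_pos.mp hh))
  have hroots : ((h - C β).roots.map (u.comp h).eval) =
      Multiset.replicate h.natDegree (u.eval β) := by
    rw [Multiset.eq_replicate, Multiset.card_map, ← hsplit.natDegree_eq_card_roots, natDegree_sub_C]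
    refine ⟨rfl, fun x hx ↦ ?_⟩
    obtain ⟨a, ha, rfl⟩ := Multiset.mem_map.mp hx
    have : h.eval a = β := by simpa [sub_eq_zero] using (mem_roots'.mp ha).2
    rw [eval_comp, this]
  rw [resultant_eq_prod_eval _ _ _ natDegree_comp.le hsplit, hlc, hroots, Multiset.prod_replicate,
    mul_pow, ← pow_mul]

theorem resultant_comp_comp_of_isAlgClosed {F : Type*} [Field F] [IsAlgClosed F]
    (g u h : F[X]) (hh : 0 < h.natDegree) :
    (g.comp h).resultant (u.comp h) =
      (h.leadingCoeff ^ (g.natDegree * u.natDegree) * g.resultant u) ^ h.natDegree := by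
  rcases eq_or_ne g 0 with rfl | hg
  · simp [natDegree_comp, pow_mul]
  set P := (g.roots.map fun β ↦ h - C β).prod
  have hP0 : (0 : F[X]) ∉ g.roots.map fun β ↦ h - C β := by
    simp only [Multiset.mem_map, not_exists, not_and]
    intro β _ hβ
    simpa [hβ] using (natDegree_sub_C (p := h) (a := β)).trans_gt hh
  have hfac : g.comp h = C g.leadingCoeff * P := by
    conv_lhs => rw [(IsAlgClosed.splits g).eq_prod_roots]
    simp [P, mul_comp, multiset_prod_comp, Multiset.map_map]
  have hPdeg : (C g.leadingCoeff * P).natDegree = P.natDegree :=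
    natDegree_C_mul (leadingCoeff_ne_zero.mpr hg)
  calc (g.comp h).resultant (u.comp h)
      = g.leadingCoeff ^ (u.natDegree * h.natDegree) *
          P.resultant (u.comp h) P.natDegree (u.natDegree * h.natDegree) := by
        rw [hfac, hPdeg, natDegree_comp, resultant_C_mul_left]
    _ = g.leadingCoeff ^ (u.natDegree * h.natDegree) *
          (g.roots.map fun β ↦ (h.leadingCoeff ^ u.natDegree * u.eval β) ^ h.natDegree).prod := by
        rw [resultant_multiset_prod_left _ hP0 _ _ natDegree_comp.le, Multiset.map_map]
        congr 2
        exact Multiset.map_congr rfl fun β _ ↦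
          resultant_sub_C_comp h u β hh (IsAlgClosed.splits _)
    _ = _ := by
        rw [resultant_eq_prod_eval g u _ le_rfl (IsAlgClosed.splits g), Multiset.prod_map_pow,
          Multiset.prod_map_mul, Multiset.map_const', Multiset.prod_replicate,
          ← (IsAlgClosed.splits g).natDegree_eq_card_roots]
        ring

theorem resultant_comp_comp (g u h : R[X]) (hh : 0 < h.natDegree) :
    (g.comp h).resultant (u.comp h) =
      (h.leadingCoeff ^ (g.natDegree * u.natDegree) * g.resultant u) ^ h.natDegree := by
  let φ : R →+* AlgebraicClosure (FractionRing R) :=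
    (algebraMap (FractionRing R) _).comp (algebraMap R (FractionRing R))
  have hφ : Function.Injective φ :=
    (algebraMap (FractionRing R) _).injective.comp (IsFractionRing.injective R (FractionRing R))
  apply hφ
  have := resultant_comp_comp_of_isAlgClosed (g.map φ) (u.map φ) (h.map φ)
    (by rwa [natDegree_map_eq_of_injective hφ])
  rw [← map_comp, ← map_comp, natDegree_map_eq_of_injective hφ, natDegree_map_eq_of_injective hφ,
    resultant_map_map] at this
  simpa [natDegree_map_eq_of_injective hφ, leadingCoeff_map_of_injective hφ] using this

end Polynomial

theorem natDegree_resultant_polySubT {K : Type*} [Field K] (f v : K[X]) (hv : v ≠ 0) :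
    ((polySubT f).resultant (v.map C)).natDegree = v.natDegree := by
  wlog hK : IsAlgClosed K generalizing K
  · let ι := algebraMap K (AlgebraicClosure K)
    have hP : (polySubT f).map (mapRingHom ι) = polySubT (f.map ι) := by
      simp [polySubT, Polynomial.map_map, mapRingHom_comp_C]
    have hV : (v.map C).map (mapRingHom ι) = (v.map ι).map C := by
      simp [Polynomial.map_map, mapRingHom_comp_C]
    have := this (f.map ι) (v.map ι) ((Polynomial.map_ne_zero_iff ι.injective).mpr hv) inferInstance
    have hι : Function.Injective (mapRingHom ι) := map_injective ι ι.injective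
    rwa [natDegree_map_eq_of_injective ι.injective, ← hP, ← hV, resultant_map_map,
      coe_mapRingHom, natDegree_map_eq_of_injective ι.injective, natDegree_map_eq_of_injective hι,
      natDegree_map_eq_of_injective hι] at this
  have hsign (n : ℕ) (p : K[X]) : ((-1) ^ n * p).natDegree = p.natDegree := by
    rcases neg_one_pow_eq_or K[X] n with h | h <;> simp [h]
  have hsplit := IsAlgClosed.splits v
  have hroots : ((v.map C).roots.map (polySubT f).eval) =
      ((v.roots.map f.eval).map fun a ↦ X - C a).map Neg.neg := by
    rw [hsplit.roots_map_of_injective C_injective, Multiset.map_map, Multiset.map_map,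
      Multiset.map_map]
    refine Multiset.map_congr rfl fun d _ ↦ ?_
    simp [polySubT]
  rw [resultant_comm, hsign, resultant_eq_prod_eval _ _ _ le_rfl (hsplit.map C), hroots,
    Multiset.prod_map_neg, leadingCoeff_map_of_injective C_injective, ← C_pow,
    natDegree_C_mul (pow_ne_zero _ (leadingCoeff_ne_zero.mpr hv)), hsign,
    natDegree_multiset_prod_X_sub_C_eq_card, Multiset.card_map, hsplit.natDegree_eq_card_roots]

theorem stmt_11_general {K : Type*} [Field K] (f g h : Polynomial K) (k : ℕ)
    (hfgh : f = g.comp h) (hk : h.natDegree = k)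
    (hf' : derivative f ≠ 0) :
    ∃ A B : Polynomial K,
      _root_.resultant (polySubT f) ((derivative f).map Polynomial.C) = A ^ k * B ∧
      B.natDegree ≤ k - 1 ∧ (CharZero K → B.natDegree = k - 1) := by
  have hchain : derivative f = (derivative g).comp h * derivative h := by
    rw [hfgh, derivative_comp, mul_comm]
  have hu : ((derivative g).map C).comp (h.map C) ≠ 0 := by
    rw [← map_comp]
    exact (Polynomial.map_ne_zero_iff C_injective).mpr (left_ne_zero_of_mul (hchain ▸ hf'))
  have hv : derivative h ≠ 0 := right_ne_zero_of_mul (hchain ▸ hf')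
  have hh : 0 < (h.map C).natDegree := by
    rw [natDegree_map_eq_of_injective C_injective]
    exact Nat.pos_of_ne_zero fun h0 ↦ hv (derivative_of_natDegree_zero h0)
  have hP : polySubT f = (polySubT g).comp (h.map C) := by
    simp [polySubT, hfgh, map_comp, sub_comp]
  have hQ : (derivative f).map C = ((derivative g).map C).comp (h.map C) * (derivative h).map C := by
    rw [hchain, Polynomial.map_mul, map_comp]
  refine ⟨(h.map C).leadingCoeff ^ ((polySubT g).natDegree * ((derivative g).map C).natDegree) *
      (polySubT g).resultant ((derivative g).map C), (polySubT f).resultant ((derivative h).map C),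
      ?_, ?_, fun _ ↦ ?_⟩
  · rw [resultant_eq_polynomial_resultant, hQ,
      natDegree_mul hu ((Polynomial.map_ne_zero_iff C_injective).mpr hv),
      resultant_mul_right _ _ _ _ le_rfl, hP, resultant_comp_comp _ _ _ hh,
      natDegree_map_eq_of_injective C_injective h, hk]
  · rw [natDegree_resultant_polySubT f _ hv, ← hk]
    exact natDegree_derivative_le h
  · rw [natDegree_resultant_polySubT f _ hv, natDegree_derivative, hk]

/-- Let `K` be a field and `f = g ∘ h` with `g` nonconstant,
`deg h = k ≥ 2`, and `f' ≠ 0`.  Let `D(t) = Res_X(f(X) − t, f'(X)) ∈ K[t]`.  Then there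
are `A, B ∈ K[t]` with `D = A^k · B` and `deg B ≤ k − 1`; moreover, if `char K = 0`,
then `deg B = k − 1`. -/
theorem stmt_11 {K : Type*} [Field K] (f g h : Polynomial K) (k : ℕ)
    (hfgh : f = g.comp h) (hg : 0 < g.natDegree) (hk : h.natDegree = k) (hk2 : 2 ≤ k)
    (hf' : derivative f ≠ 0) :
    ∃ A B : Polynomial K,
      _root_.resultant (polySubT f) ((derivative f).map Polynomial.C) = A ^ k * B ∧
      B.natDegree ≤ k - 1 ∧ (CharZero K → B.natDegree = k - 1) :=
  stmt_11_general f g h k hfgh hk hf'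
end
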